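/- Let G = (V, E) be a finite simple graph and h ∈ ℕ. Suppose there exists a vertex subset with at least h induced edges. Let k be the minimum cardinality of |S| over all subsets S ⊆ V that maximize density d(S) = |E(S)|/|S| among subsets with |E(S)| ≥ h. If S* is a subset maximizing density among all subsets with |S| ≥ k, then S* also maximizes density among all subsets with at least h induced edges. -/
import Mathlib


open Finset

variable {V : Type*}

def edgesIn [Fintype V] [DecidableEq V] (G : SimpleGraph V) [DecidableRel G.Adj]
    (S : Finset V) : Finset (Sym2 V) :=
  G.edgeFinset ∩ S.sym2

noncomputable def density [Fintype V] [DecidableEq V] (G : SimpleGraph V) [DecidableRel G.Adj]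
    (S : Finset V) : ℝ :=
  ((edgesIn G S).card : ℝ) / (S.card : ℝ)

theorem stmt_2 [Fintype V] [DecidableEq V] (G : SimpleGraph V) [DecidableRel G.Adj]
    (h k : ℕ)
    (hfeas : ∃ S : Finset V, h ≤ (edgesIn G S).card)
    (hkex : ∃ S : Finset V, h ≤ (edgesIn G S).card ∧
      (∀ T : Finset V, h ≤ (edgesIn G T).card → density G T ≤ density G S) ∧ S.card = k)
    (hkmin : ∀ S : Finset V, h ≤ (edgesIn G S).card →
      (∀ T : Finset V, h ≤ (edgesIn G T).card → density G T ≤ density G S) → k ≤ S.card)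
    (Sstar : Finset V)
    (hS1 : k ≤ Sstar.card)
    (hS2 : ∀ T : Finset V, k ≤ T.card → density G T ≤ density G Sstar) :
    ∀ T : Finset V, h ≤ (edgesIn G T).card → density G T ≤ density G Sstar := by
  obtain ⟨S₀, hS₀e, hS₀opt, hS₀k⟩ := hkex
  intro T hT
  exact (hS₀opt T hT).trans (hS2 S₀ hS₀k.ge)
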